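/- There exists a computable ρ : ℕ×ℕ → ℚ with 0 ≤ ρ(n,m) ≤ 1 for all n, m, such that for every n ∈ ℕ, writing c_n for the n-th code of a partial recursive function (via the standard denumerable encoding of Nat.Partrec.Code): limsup_{m→∞} ρ(n,m) = 1 if (c_n.eval x) is defined for every x ∈ ℕ, and limsup_{m→∞} ρ(n,m) = 0 otherwise. Consequently, the entire function f_n(z) := Σ_{m=0}^∞ ρ(n,m)^m·z^m/m! lies in CE_π and satisfies bw(f_n) = 1 if c_n is total and bw(f_n) = 0 otherwise. -/

import Mathlib

open Complex Filter MeasureTheory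
open scoped Real Topology Classical

/-- The actual bandwidth of `f`: `limsup_n |f⁽ⁿ⁾(0)|^(1/n)`. -/
noncomputable def bw (f : ℂ → ℂ) : ℝ :=
  Filter.limsup (fun n : ℕ => ‖iteratedDeriv n f 0‖ ^ ((n : ℝ)⁻¹)) Filter.atTop

/-- `r` is a description of the entire function `f` (via its Taylor coefficients at 0). -/
def IsDescription (r : ℕ × ℕ → ℚ × ℚ) (f : ℂ → ℂ) : Prop :=
  ∀ n m : ℕ,
    ‖iteratedDeriv n f 0 - (((r (n, m)).1 : ℂ) + ((r (n, m)).2 : ℂ) * Complex.I)‖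
      ≤ (2 : ℝ) ^ (-(m : ℤ))

/-- Membership in `CE_π`. -/
def MemCE (f : ℂ → ℂ) : Prop :=
  Differentiable ℂ f ∧ bw f ≤ Real.pi ∧ ∃ r : ℕ × ℕ → ℚ × ℚ, Computable r ∧ IsDescription r f

/-- Evaluation of the Gaussian-rational polynomial with coefficient list `c`. -/
noncomputable def polyEval (c : List (ℚ × ℚ)) (z : ℂ) : ℂ :=
  (((List.range c.length).zip c).map fun p => (((p.2.1 : ℂ)) + (p.2.2 : ℂ) * Complex.I) * z ^ p.1).sum

/-- The natural number `e`, viewed as a code of a partial recursive function, computes the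
total function `g` (via the standard encodings). -/
def CodeComputes {α β : Type} [Primcodable α] [Primcodable β] (e : ℕ) (g : α → β) : Prop :=
  ∀ a : α, (Denumerable.ofNat Nat.Partrec.Code e).eval (Encodable.encode a) =
    Part.some (Encodable.encode (g a))

/-- `x` is a computable real number. -/
def ComputableReal (x : ℝ) : Prop :=
  ∃ r : ℕ → ℚ, Computable r ∧ ∀ m : ℕ, |x - (r m : ℝ)| ≤ (2 : ℝ) ^ (-(m : ℤ))

/-- The function `sinc_π` on the reals. -/
noncomputable def sincR (t : ℝ) : ℝ :=
  if t = 0 then 1 else Real.sin (Real.pi * t) / (Real.pi * t)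

/-- The elementary computable signal with coefficients `c k`, `k = -L, …, L`. -/
noncomputable def elemSignal (L : ℕ) (c : ℤ → ℚ × ℚ) (t : ℝ) : ℂ :=
  ∑ k ∈ Finset.Icc (-(L : ℤ)) (L : ℤ),
    (((c k).1 : ℂ) + ((c k).2 : ℂ) * Complex.I) * (sincR (t - k) : ℂ)

/-- Membership in `CB^p_π`. -/
def MemCB (p : ℝ) (f : ℂ → ℂ) : Prop :=
  Differentiable ℂ f ∧ bw f ≤ Real.pi ∧
    MemLp (fun t : ℝ => f t) (ENNReal.ofReal p) volume ∧
    ∃ (L : ℕ → ℕ) (c : ℕ → ℤ → ℚ × ℚ), Computable L ∧ Computable₂ c ∧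
      ∀ m : ℕ,
        eLpNorm (fun t : ℝ => f t - elemSignal (L m) (c m) t) (ENNReal.ofReal p) volume
          ≤ ENNReal.ofReal ((2 : ℝ) ^ (-(m : ℤ)))

/-!
Run code `n` on inputs `0, 1, 2, …` with step bound `k`, and let `t k` be the length (capped
at `k`) of the initial segment of inputs on which it has halted. This is primitive recursive
and monotone in `k`; it is unbounded if the code is total and stays below the first divergent
input otherwise. Hence `ρ(n, m) := [t m < t (m + 1)]` takes the value `1` infinitely often
exactly for total codes, and is eventually `0` otherwise.

Since `ρ(n, m) ∈ {0, 1}`, the Taylor coefficients `ρ(n, m) ^ m` of `f_n` are computable and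
`‖ρ(n, m) ^ m‖ ^ (1 / m) = ρ(n, m)`, so `bw f_n = limsup ρ(n, ·)`.
-/

open Nat.Partrec (Code)

theorem Monotone.frequently_lt_succ_iff_not_bddAbove {t : ℕ → ℕ} (ht : Monotone t) :
    (∃ᶠ m in atTop, t m < t (m + 1)) ↔ ¬BddAbove (Set.range t) := by
  constructor
  · intro hfreq ⟨B, hB⟩
    have hgrow : ∀ N : ℕ, ∃ m, N ≤ t m := by
      intro N
      induction N with
      | zero => exact ⟨0, Nat.zero_le _⟩
      | succ N ih =>
        obtain ⟨m, hm⟩ := ih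
        obtain ⟨m', hmm', hlt⟩ := (frequently_atTop.1 hfreq) m
        exact ⟨m' + 1, by linarith [ht hmm']⟩
    obtain ⟨m, hm⟩ := hgrow (B + 1)
    exact absurd (hB ⟨m, rfl⟩) (by omega)
  · intro hunbdd
    by_contra hfreq
    obtain ⟨M, hM⟩ := eventually_atTop.1 (not_frequently.1 hfreq)
    have hconst : ∀ m, M ≤ m → t m ≤ t M := by
      intro m hm
      induction m, hm using Nat.le_induction with
      | base => exact le_rfl
      | succ m hm ih => exact (not_lt.1 (hM m hm)).trans ih
    refine hunbdd ⟨t M, ?_⟩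
    rintro _ ⟨m, rfl⟩
    rcases le_total m M with h | h
    · exact ht h
    · exact hconst m h

theorem limsup_ite_one_zero {ι : Type*} {l : Filter ι} [l.NeBot] (p : ι → Prop)
    [DecidablePred p] :
    limsup (fun i => if p i then (1 : ℝ) else 0) l = if ∃ᶠ i in l, p i then 1 else 0 := by
  have hle : ∀ i, (if p i then (1 : ℝ) else 0) ≤ 1 := fun i => by split_ifs <;> norm_num
  have hge : ∀ i, 0 ≤ (if p i then (1 : ℝ) else 0) := fun i => by split_ifs <;> norm_num
  split_ifs with h
  · refine le_antisymm (limsup_le_of_le (isCoboundedUnder_le_of_le l hge) (.of_forall hle)) ?_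
    exact le_limsup_of_frequently_le (h.mono fun i hi => by simp [hi])
      (isBoundedUnder_of ⟨1, hle⟩)
  · rw [← limsup_const (f := l) (0 : ℝ)]
    exact limsup_congr ((not_frequently.1 h).mono fun i hi => by simp [hi])

namespace Nat.Partrec.Code

def haltingPrefix (c : Code) (k : ℕ) : ℕ :=
  Nat.findGreatest (fun j => ∀ x < j, (evaln k c x).isSome) k

theorem haltingPrefix_mono (c : Code) : Monotone c.haltingPrefix := by
  intro k k' hk
  refine Nat.findGreatest_mono (fun j hj x hx => ?_) hk
  obtain ⟨y, hy⟩ := Option.isSome_iff_exists.1 (hj x hx)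
  exact Option.isSome_iff_exists.2 ⟨y, evaln_mono hk hy⟩

theorem haltingPrefix_le_of_not_dom {c : Code} {x : ℕ} (hx : ¬(eval c x).Dom) (k : ℕ) :
    c.haltingPrefix k ≤ x := by
  by_contra! hlt
  have hhalts := Nat.findGreatest_spec (P := fun j => ∀ x < j, (evaln k c x).isSome)
    (Nat.zero_le k) (by simp) x hlt
  obtain ⟨y, hy⟩ := Option.isSome_iff_exists.1 hhalts
  exact hx (Part.dom_iff_mem.2 ⟨y, evaln_sound hy⟩)

theorem exists_le_haltingPrefix {c : Code} (hc : ∀ x, (eval c x).Dom) (N : ℕ) :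
    ∃ k, N ≤ c.haltingPrefix k := by
  have hhalts : ∀ x, ∀ᶠ k in atTop, (evaln k c x).isSome := fun x => by
    obtain ⟨y, hy⟩ := Part.dom_iff_mem.1 (hc x)
    obtain ⟨k₀, hk₀⟩ := evaln_complete.1 hy
    exact eventually_atTop.2 ⟨k₀, fun k hk => Option.isSome_iff_exists.2 ⟨y, evaln_mono hk hk₀⟩⟩
  have hall : ∀ᶠ k in atTop, ∀ x ∈ Finset.range N, (evaln k c x).isSome :=
    (Finset.range N).eventually_all.2 fun x _ => hhalts x
  obtain ⟨k, hNk, hk⟩ := ((eventually_ge_atTop N).and hall).exists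
  exact ⟨k, Nat.le_findGreatest hNk fun x hx => hk x (Finset.mem_range.2 hx)⟩

theorem bddAbove_range_haltingPrefix_iff (c : Code) :
    BddAbove (Set.range c.haltingPrefix) ↔ ¬∀ x, (eval c x).Dom := by
  constructor
  · rintro ⟨B, hB⟩ hc
    obtain ⟨k, hk⟩ := exists_le_haltingPrefix hc (B + 1)
    exact absurd (hB ⟨k, rfl⟩) (by omega)
  · intro hc
    obtain ⟨x, hx⟩ := not_forall.1 hc
    exact ⟨x, by rintro _ ⟨k, rfl⟩; exact haltingPrefix_le_of_not_dom hx k⟩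

theorem primrec_haltingPrefix : Primrec fun p : Code × ℕ => p.1.haltingPrefix p.2 := by
  have hhalts : PrimrecRel fun (x : ℕ) (p : Code × ℕ) => (evaln p.2 p.1 x).isSome := by
    refine Primrec₂.primrecRel (Primrec₂.of_eq ?_ fun _ _ => Bool.decide_eq_true.symm)
    exact Primrec.option_isSome.comp (primrec_evaln.comp
      (((Primrec.snd.comp Primrec.snd).pair (Primrec.fst.comp Primrec.snd)).pair Primrec.fst))
  exact Primrec.nat_findGreatest Primrec.snd
    ((hhalts.forall_mem_list.comp (Primrec.list_range.comp Primrec.snd) Primrec.fst).of_eq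
      fun _ => by simp)

end Nat.Partrec.Code

def haltingPrefixGrows (p : ℕ × ℕ) : ℚ :=
  if (Denumerable.ofNat Code p.1).haltingPrefix p.2 <
      (Denumerable.ofNat Code p.1).haltingPrefix (p.2 + 1) then 1 else 0

theorem haltingPrefixGrows_nonneg (p : ℕ × ℕ) : 0 ≤ haltingPrefixGrows p := by
  unfold haltingPrefixGrows; split_ifs <;> norm_num

theorem haltingPrefixGrows_le_one (p : ℕ × ℕ) : haltingPrefixGrows p ≤ 1 := by
  unfold haltingPrefixGrows; split_ifs <;> norm_num

theorem isIdempotentElem_haltingPrefixGrows (p : ℕ × ℕ) :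
    IsIdempotentElem (haltingPrefixGrows p) := by
  unfold haltingPrefixGrows; split_ifs
  exacts [.one, .zero]

theorem norm_haltingPrefixGrows (p : ℕ × ℕ) :
    ‖(haltingPrefixGrows p : ℂ)‖ = haltingPrefixGrows p := by
  rw [Complex.norm_ratCast, abs_of_nonneg (by exact_mod_cast haltingPrefixGrows_nonneg p)]

theorem limsup_haltingPrefixGrows (n : ℕ) :
    limsup (fun m => (haltingPrefixGrows (n, m) : ℝ)) atTop =
      if ∀ x, ((Denumerable.ofNat Code n).eval x).Dom then 1 else 0 := by
  simp only [haltingPrefixGrows, apply_ite (Rat.cast : ℚ → ℝ), Rat.cast_one, Rat.cast_zero]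
  rw [limsup_ite_one_zero, (Code.haltingPrefix_mono _).frequently_lt_succ_iff_not_bddAbove,
    Code.bddAbove_range_haltingPrefix_iff, not_not]

theorem primrec_haltingPrefixGrows : Primrec haltingPrefixGrows := by
  have hcode : Primrec fun p : ℕ × ℕ => Denumerable.ofNat Code p.1 :=
    (Primrec.ofNat Code).comp Primrec.fst
  exact Primrec.ite (Primrec.nat_lt.comp (Code.primrec_haltingPrefix.comp (hcode.pair Primrec.snd))
      (Code.primrec_haltingPrefix.comp (hcode.pair (Primrec.succ.comp Primrec.snd))))
    (Primrec.const 1) (Primrec.const 0)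

theorem primrec_haltingPrefixGrows_pow :
    Primrec fun p : ℕ × ℕ => haltingPrefixGrows p ^ p.2 := by
  refine (Primrec.ite (Primrec.eq.comp Primrec.snd (Primrec.const 0)) (Primrec.const 1)
    primrec_haltingPrefixGrows).of_eq fun p => ?_
  split_ifs with h
  · rw [h, pow_zero]
  · exact ((isIdempotentElem_haltingPrefixGrows p).pow_eq h).symm

section TaylorCoefficients

variable {a : ℕ → ℂ} {C : ℝ}

theorem hasFPowerSeriesOnBall_tsum_mul_pow_div_factorial (ha : ∀ m, ‖a m‖ ≤ C ^ m) :
    HasFPowerSeriesOnBall (fun z : ℂ => ∑' m : ℕ, a m * z ^ m / (m.factorial : ℂ))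
      (FormalMultilinearSeries.ofScalars ℂ fun m => a m / (m.factorial : ℂ)) 0 ⊤ := by
  set p := FormalMultilinearSeries.ofScalars ℂ fun m => a m / (m.factorial : ℂ)
  have hp : p.radius = ⊤ := by
    refine p.radius_eq_top_of_summable_norm fun r => ?_
    refine (Real.summable_pow_div_factorial (C * r)).of_nonneg_of_le (fun m => by positivity)
      fun m => ?_
    rw [FormalMultilinearSeries.ofScalars_norm, norm_div, Complex.norm_natCast, mul_pow,
      div_mul_eq_mul_div]
    gcongr
    exact ha m
  have hsum := p.hasFPowerSeriesOnBall (hp ▸ ENNReal.zero_lt_top)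
  rw [hp] at hsum
  convert hsum using 2 with z
  refine tsum_congr fun m => ?_
  rw [FormalMultilinearSeries.ofScalars_apply_eq, smul_eq_mul]
  ring

theorem differentiable_tsum_mul_pow_div_factorial (ha : ∀ m, ‖a m‖ ≤ C ^ m) :
    Differentiable ℂ fun z : ℂ => ∑' m : ℕ, a m * z ^ m / (m.factorial : ℂ) := fun z =>
  ((hasFPowerSeriesOnBall_tsum_mul_pow_div_factorial ha).analyticAt_of_mem
    (by simp)).differentiableAt

theorem iteratedDeriv_tsum_mul_pow_div_factorial (ha : ∀ m, ‖a m‖ ≤ C ^ m) (m : ℕ) :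
    iteratedDeriv m (fun z : ℂ => ∑' k : ℕ, a k * z ^ k / (k.factorial : ℂ)) 0 = a m := by
  rw [iteratedDeriv_eq_iteratedFDeriv,
    ← (hasFPowerSeriesOnBall_tsum_mul_pow_div_factorial ha).factorial_smul 1 m,
    FormalMultilinearSeries.ofScalars_apply_eq, one_pow, smul_eq_mul, mul_one, nsmul_eq_mul,
    mul_div_cancel₀ _ (Nat.cast_ne_zero.2 m.factorial_ne_zero)]

theorem bw_tsum_mul_pow_div_factorial (ha : ∀ m, ‖a m‖ ≤ C ^ m) :
    bw (fun z : ℂ => ∑' m : ℕ, a m * z ^ m / (m.factorial : ℂ)) =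
      limsup (fun m : ℕ => ‖a m‖ ^ (m : ℝ)⁻¹) atTop := by
  simp only [bw, iteratedDeriv_tsum_mul_pow_div_factorial ha]

theorem bw_tsum_pow_mul_pow_div_factorial {q : ℕ → ℂ} (hq : ∀ m, ‖q m‖ ≤ C) :
    bw (fun z : ℂ => ∑' m : ℕ, q m ^ m * z ^ m / (m.factorial : ℂ)) =
      limsup (fun m => ‖q m‖) atTop := by
  rw [bw_tsum_mul_pow_div_factorial (a := fun m => q m ^ m) fun m => by
    rw [norm_pow]; exact pow_le_pow_left₀ (norm_nonneg _) (hq m) m]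
  refine limsup_congr ?_
  filter_upwards [eventually_ne_atTop 0] with m hm
  rw [norm_pow, Real.pow_rpow_inv_natCast (norm_nonneg _) hm]

end TaylorCoefficients

theorem memCE_tsum_mul_pow_div_factorial {a : ℕ → ℚ} {C : ℝ} (ha : Computable a)
    (haC : ∀ m, ‖(a m : ℂ)‖ ≤ C ^ m) (hC : C ≤ Real.pi) :
    MemCE fun z : ℂ => ∑' m : ℕ, (a m : ℂ) * z ^ m / (m.factorial : ℂ) := by
  refine ⟨differentiable_tsum_mul_pow_div_factorial haC, ?_,
    fun p => (a p.1, 0), (ha.comp .fst).pair (.const 0), fun k m => ?_⟩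
  · have hC₀ : 0 ≤ C := (norm_nonneg (a 1 : ℂ)).trans (by simpa only [pow_one] using haC 1)
    rw [bw_tsum_mul_pow_div_factorial haC]
    refine limsup_le_of_le (isCoboundedUnder_le_of_le atTop fun m => by positivity) ?_
    filter_upwards [eventually_ne_atTop 0] with m hm
    calc ‖(a m : ℂ)‖ ^ (m : ℝ)⁻¹ ≤ (C ^ m) ^ (m : ℝ)⁻¹ :=
          Real.rpow_le_rpow (norm_nonneg _) (haC m) (by positivity)
      _ = C := Real.pow_rpow_inv_natCast hC₀ hm
      _ ≤ Real.pi := hC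
  · simp [iteratedDeriv_tsum_mul_pow_div_factorial haC]

theorem stmt17 :
    ∃ ρ : ℕ × ℕ → ℚ, Computable ρ ∧ (∀ n m : ℕ, 0 ≤ ρ (n, m) ∧ ρ (n, m) ≤ 1) ∧
      ∀ n : ℕ,
        (Filter.limsup (fun m : ℕ => (ρ (n, m) : ℝ)) Filter.atTop =
          if ∀ x : ℕ, ((Denumerable.ofNat Nat.Partrec.Code n).eval x).Dom then 1 else 0) ∧
        MemCE (fun z : ℂ => ∑' m : ℕ, ((ρ (n, m) : ℂ)) ^ m * z ^ m / (m.factorial : ℂ)) ∧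
        bw (fun z : ℂ => ∑' m : ℕ, ((ρ (n, m) : ℂ)) ^ m * z ^ m / (m.factorial : ℂ)) =
          (if ∀ x : ℕ, ((Denumerable.ofNat Nat.Partrec.Code n).eval x).Dom then 1 else 0) := by
  refine ⟨haltingPrefixGrows, primrec_haltingPrefixGrows.to_comp,
    fun n m => ⟨haltingPrefixGrows_nonneg _, haltingPrefixGrows_le_one _⟩, fun n => ?_⟩
  have hle_one : ∀ m, ‖(haltingPrefixGrows (n, m) : ℂ)‖ ≤ 1 := fun m => by
    rw [norm_haltingPrefixGrows]; exact_mod_cast haltingPrefixGrows_le_one _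
  refine ⟨limsup_haltingPrefixGrows n, ?_, ?_⟩
  · simp_rw [← Rat.cast_pow]
    refine memCE_tsum_mul_pow_div_factorial (C := 1)
      (primrec_haltingPrefixGrows_pow.comp ((Primrec.const n).pair Primrec.id)).to_comp
      (fun m => ?_) (by linarith [Real.pi_gt_three])
    rw [Rat.cast_pow, norm_pow]
    exact pow_le_pow_left₀ (norm_nonneg _) (hle_one m) m
  · rw [bw_tsum_pow_mul_pow_div_factorial hle_one]
    simp_rw [norm_haltingPrefixGrows]
    exact limsup_haltingPrefixGrows n
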